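/- arXiv:2504.14312 — 2 statements merged into one kernel-verified Lean document; each statement's English description precedes it below -/
import Mathlib

section
/- With E_st = ω₀(γ e^{-β₀ω₀} + 2Ω²Δt)/(γ(1+e^{-β₀ω₀}) + 4Ω²Δt) and β(E) = -(1/ω₀) ln(E/(ω₀ - E)), one has β(E_st) = β₀ - (1/ω₀) ln((1 + (2Ω²Δt/γ)e^{β₀ω₀})/(1 + 2Ω²Δt/γ)), for γ > 0, ω₀ > 0, Ω²Δt ≥ 0. -/
open Real

/-!
Writing the stationary energy as `ω₀ p / (p + q)` with `p = γ e^{-β₀ω₀} + 2Ω²Δt` and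
`q = γ + 2Ω²Δt`, the Gibbs ratio `E / (ω₀ - E)` is `p / q`, which factors as
`e^{-β₀ω₀} (1 + (2Ω²Δt/γ) e^{β₀ω₀}) / (1 + 2Ω²Δt/γ)`; the logarithm splits the factor
`e^{-β₀ω₀}` off as the bath inverse temperature `β₀`.
-/

lemma div_sub_eq_div_of_eq_mul_div {ω₀ p q E : ℝ} (hω₀ : ω₀ ≠ 0) (hpq : p + q ≠ 0)
    (hE : E = ω₀ * p / (p + q)) : E / (ω₀ - E) = p / q := by
  have hsub : ω₀ - E = ω₀ * q / (p + q) := by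
    rw [hE]
    field_simp
    ring
  rw [hsub, hE, div_div_div_cancel_right₀ hpq, mul_div_mul_left _ _ hω₀]

lemma mul_add_div_add_eq_mul_div {γ x c : ℝ} (hγ : γ ≠ 0) (hx : x ≠ 0) :
    (γ * x + c) / (γ + c) = x * ((1 + c / γ * x⁻¹) / (1 + c / γ)) := by
  field_simp

lemma neg_one_div_mul_log_exp_mul {ω₀ r : ℝ} (β : ℝ) (hω₀ : ω₀ ≠ 0) (hr : r ≠ 0) :
    -(1 / ω₀) * log (exp (-β * ω₀) * r) = β - (1 / ω₀) * log r := by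
  rw [log_mul (exp_pos _).ne' hr, log_exp]
  field_simp
  ring

/-- The stationary inverse temperature measured by a driven two-level probe:
`β(E_st) = β₀ - (1/ω₀) ln((1 + (2Ω²Δt/γ)e^{β₀ω₀})/(1 + 2Ω²Δt/γ))`. -/
theorem stationary_inverse_temperature
    (γ ω₀ β₀ Ω Δt : ℝ) (hγ : 0 < γ) (hω₀ : 0 < ω₀) (hΩΔt : 0 ≤ Ω ^ 2 * Δt)
    (Est : ℝ)
    (hEst : Est = ω₀ * (γ * exp (-β₀ * ω₀) + 2 * Ω ^ 2 * Δt) /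
      (γ * (1 + exp (-β₀ * ω₀)) + 4 * Ω ^ 2 * Δt)) :
    -(1 / ω₀) * log (Est / (ω₀ - Est))
      = β₀ - (1 / ω₀) *
        log ((1 + (2 * Ω ^ 2 * Δt / γ) * exp (β₀ * ω₀)) /
          (1 + 2 * Ω ^ 2 * Δt / γ)) := by
  set e := exp (-β₀ * ω₀)
  have he : 0 < e := exp_pos _
  have hdrive : 0 ≤ 2 * Ω ^ 2 * Δt := by rw [mul_assoc]; positivity
  have hsplit : γ * (1 + e) + 4 * Ω ^ 2 * Δt
      = (γ * e + 2 * Ω ^ 2 * Δt) + (γ + 2 * Ω ^ 2 * Δt) := by ring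
  rw [hsplit] at hEst
  have hratio := div_sub_eq_div_of_eq_mul_div hω₀.ne' (by positivity) hEst
  have hexp : exp (β₀ * ω₀) = e⁻¹ := by rw [← exp_neg, neg_mul, neg_neg]
  rw [hratio, mul_add_div_add_eq_mul_div hγ.ne' he.ne', ← hexp,
    neg_one_div_mul_log_exp_mul β₀ hω₀.ne' (by positivity)]
end

section
/- With β_st = β₀ - (1/ω₀) ln((1 + c·e^{β₀ω₀})/(1 + c)) where c = 2Ω²Δt/γ ≥ 0 and β₀, ω₀ > 0, one has β_st ≤ β₀, with equality if and only if c = 0. (The external drive biases the measured temperature upward, i.e., lowers the measured inverse temperature.) -/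
open Real

/-- The external drive lowers the measured stationary inverse temperature:
`β_st ≤ β₀`, with equality iff the drive vanishes (`c = 0`). -/
theorem drive_lowers_inverse_temperature
    (β₀ ω₀ c : ℝ) (hβ₀ : 0 < β₀) (hω₀ : 0 < ω₀) (hc : 0 ≤ c)
    (βst : ℝ)
    (hβst : βst = β₀ - (1 / ω₀) * log ((1 + c * exp (β₀ * ω₀)) / (1 + c))) :
    βst ≤ β₀ ∧ (βst = β₀ ↔ c = 0) := by
  have he : 1 < exp (β₀ * ω₀) := by
    have : 0 < β₀ * ω₀ := mul_pos hβ₀ hω₀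
    exact Real.one_lt_exp_iff.mpr this
  have hden : 0 < 1 + c := by linarith
  have hratio : 1 ≤ (1 + c * exp (β₀ * ω₀)) / (1 + c) := by
    rw [le_div_iff₀ hden]
    nlinarith [mul_le_mul_of_nonneg_left he.le hc]
  have hlog : 0 ≤ log ((1 + c * exp (β₀ * ω₀)) / (1 + c)) :=
    Real.log_nonneg hratio
  have hω₀' : 0 < 1 / ω₀ := by positivity
  constructor
  · rw [hβst]; nlinarith
  · constructor
    · intro h
      rw [hβst] at h
      have hlog0 : log ((1 + c * exp (β₀ * ω₀)) / (1 + c)) = 0 := by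
        nlinarith
      have hr1 : (1 + c * exp (β₀ * ω₀)) / (1 + c) = 1 := by
        rcases lt_or_eq_of_le hratio with h1 | h1
        · exfalso
          have := Real.log_pos h1
          linarith
        · exact h1.symm
      rw [div_eq_one_iff_eq (ne_of_gt hden)] at hr1
      nlinarith
    · intro h
      rw [hβst, h]
      simp
end
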